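/- arXiv:2411.13446 — 3 statements merged into one kernel-verified Lean document; each statement's English description precedes it below -/
import Mathlib

section
/- Let Ω ⊆ ℝ² be a measurable set with finite Lebesgue measure, let γ ∈ (2/3, 1), and let C₀, M > 0. Then there exist an exponent q ∈ (1, ∞) and constants α > 0 and C > 0 such that for every ε ∈ (0, 1], every measurable f : Ω → [0, ∞) with ‖f‖_{L²(Ω)} ≤ C₀ · ε^{γ−1}, and every nonnegative g ∈ L^q(Ω), one has ε · ∫_{{x ∈ Ω : ε f(x) ≤ M}} f(x)² g(x) dx ≤ C · ε^α · ‖g‖_{L^q(Ω)}. -/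
open MeasureTheory Set

/-! On the truncation set `{ε f ≤ M}` one has `f ^ (8/3) ≤ (M/ε) ^ (2/3) * f ^ 2`, so Hölder's
inequality with exponents `4/3` and `4` bounds `∫ f² g` by `((M/ε) ^ (2/3) ‖f‖₂²) ^ (3/4) ‖g‖₄`,
which is at most a constant times `ε ^ (-1/2 + 3(γ-1)/2) ‖g‖₄`. Multiplying by `ε` leaves
`ε ^ (3γ/2 - 1)`, a positive power because `γ > 2/3`. -/

section

variable {α : Type*} [MeasurableSpace α] {μ : Measure α}

theorem memLp_ofReal_of_integrable_rpow {f : α → ℝ} {p : ℝ} (hp : 0 < p)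
    (hf : AEStronglyMeasurable f μ) (hf0 : 0 ≤ᵐ[μ] f)
    (hfp : Integrable (fun x => f x ^ p) μ) : MemLp f (ENNReal.ofReal p) μ := by
  refine (integrable_norm_rpow_iff hf (by simpa using hp) ENNReal.ofReal_ne_top).1 ?_
  rw [ENNReal.toReal_ofReal hp.le]
  refine hfp.congr ?_
  filter_upwards [hf0] with x hx
  rw [Real.norm_of_nonneg hx]

theorem Real.sq_rpow_le_of_le {t K p : ℝ} (ht : 0 ≤ t) (htK : t ≤ K) (hp : 1 ≤ p) :
    (t ^ 2) ^ p ≤ K ^ (2 * (p - 1)) * t ^ 2 := by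
  have hsplit : (t ^ 2) ^ p = t ^ (2 * (p - 1)) * t ^ 2 := by
    rw [← Real.rpow_natCast t 2, ← Real.rpow_mul ht,
      ← Real.rpow_add' ht (by norm_num; linarith)]
    ring_nf
  rw [hsplit]
  gcongr

theorem integral_sq_mul_le_of_ae_le {p q K B D : ℝ} (hpq : p.HolderConjugate q) {f g : α → ℝ}
    (hf : AEStronglyMeasurable f μ) (hg : AEStronglyMeasurable g μ) (hf0 : 0 ≤ᵐ[μ] f)
    (hg0 : 0 ≤ᵐ[μ] g) (hK : 0 ≤ K) (hfK : ∀ᵐ x ∂μ, f x ≤ K)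
    (hf2 : Integrable (fun x => f x ^ 2) μ) (hgq : Integrable (fun x => g x ^ q) μ)
    (hfB : ∫ x, f x ^ 2 ∂μ ≤ B) (hgD : ∫ x, g x ^ q ∂μ ≤ D) :
    ∫ x, f x ^ 2 * g x ∂μ ≤ (K ^ (2 * (p - 1)) * B) ^ (1 / p) * D ^ (1 / q) := by
  have hbound : ∀ᵐ x ∂μ, (f x ^ 2) ^ p ≤ K ^ (2 * (p - 1)) * f x ^ 2 := by
    filter_upwards [hf0, hfK] with x hx0 hxK using Real.sq_rpow_le_of_le hx0 hxK hpq.lt.le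
  have hf2m : AEStronglyMeasurable (fun x => f x ^ 2) μ :=
    (hf.aemeasurable.pow_const 2).aestronglyMeasurable
  have hf2_nonneg : 0 ≤ᵐ[μ] fun x => f x ^ 2 := ae_of_all _ fun x => sq_nonneg (f x)
  have hf2p : Integrable (fun x => (f x ^ 2) ^ p) μ := by
    refine (hf2.const_mul (K ^ (2 * (p - 1)))).mono'
      (hf2m.aemeasurable.pow_const p).aestronglyMeasurable ?_
    filter_upwards [hbound] with x hx
    rwa [Real.norm_of_nonneg (by positivity)]
  have hf2p_le : ∫ x, (f x ^ 2) ^ p ∂μ ≤ K ^ (2 * (p - 1)) * B := by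
    refine (integral_mono_ae hf2p (hf2.const_mul _) hbound).trans ?_
    rw [integral_const_mul]
    gcongr
  calc ∫ x, f x ^ 2 * g x ∂μ
      ≤ (∫ x, (f x ^ 2) ^ p ∂μ) ^ (1 / p) * (∫ x, g x ^ q ∂μ) ^ (1 / q) :=
        integral_mul_le_Lp_mul_Lq_of_nonneg hpq hf2_nonneg hg0
          (memLp_ofReal_of_integrable_rpow hpq.pos hf2m hf2_nonneg hf2p)
          (memLp_ofReal_of_integrable_rpow hpq.symm.pos hg hg0 hgq)
    _ ≤ (K ^ (2 * (p - 1)) * B) ^ (1 / p) * D ^ (1 / q) := by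
        have hB : 0 ≤ B := (integral_nonneg_of_ae hf2_nonneg).trans hfB
        have hgq_nonneg : 0 ≤ ∫ x, g x ^ q ∂μ :=
          integral_nonneg_of_ae (hg0.mono fun x hx => Real.rpow_nonneg hx q)
        gcongr
        · exact hpq.one_div_nonneg
        · exact hpq.symm.one_div_nonneg

end

theorem eps_mul_truncated_holder_bound_eq {ε M C₀ γ : ℝ} (hε : 0 < ε) (hM : 0 ≤ M)
    (hC₀ : 0 ≤ C₀) :
    ε * ((M / ε) ^ (2 / 3 : ℝ) * (C₀ * ε ^ (γ - 1)) ^ 2) ^ (3 / 4 : ℝ) =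
      M ^ (1 / 2 : ℝ) * C₀ ^ (3 / 2 : ℝ) * ε ^ (3 * γ / 2 - 1) := by
  have hε_pow : ε * ε ^ ((γ - 1) * (3 / 2)) / ε ^ (1 / 2 : ℝ) = ε ^ (3 * γ / 2 - 1) := by
    conv_lhs => enter [1, 1]; rw [← Real.rpow_one ε]
    rw [← Real.rpow_add hε, ← Real.rpow_sub hε]
    ring_nf
  rw [Real.mul_rpow (by positivity) (by positivity), Real.div_rpow hM hε.le,
    ← Real.rpow_natCast _ 2, ← Real.rpow_mul (by positivity),
    Real.div_rpow (by positivity) (by positivity), Real.mul_rpow hC₀ (by positivity),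
    ← Real.rpow_mul hM, ← Real.rpow_mul hε.le, ← Real.rpow_mul hε.le, ← hε_pow]
  norm_num
  ring

theorem lp_bound_lemma_general (Ω : Set (EuclideanSpace ℝ (Fin 2))) (hΩm : MeasurableSet Ω)
    (γ : ℝ) (hγ : γ ∈ Ioo (2 / 3 : ℝ) 1)
    (C₀ M : ℝ) (hC₀ : 0 < C₀) (hM : 0 < M) :
    ∃ q : ℝ, 1 < q ∧ ∃ α > (0 : ℝ), ∃ C > (0 : ℝ),
      ∀ ε ∈ Ioc (0 : ℝ) 1,
        ∀ f : EuclideanSpace ℝ (Fin 2) → ℝ, Measurable f → (∀ x, 0 ≤ f x) →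
          IntegrableOn (fun x => f x ^ 2) Ω →
          (∫ x in Ω, f x ^ 2) ^ (1 / 2 : ℝ) ≤ C₀ * ε ^ (γ - 1) →
          ∀ g : EuclideanSpace ℝ (Fin 2) → ℝ, Measurable g → (∀ x, 0 ≤ g x) →
            IntegrableOn (fun x => g x ^ q) Ω →
            ε * ∫ x in {x ∈ Ω | ε * f x ≤ M}, f x ^ 2 * g x ≤
              C * ε ^ α * (∫ x in Ω, g x ^ q) ^ (1 / q) := by
  refine ⟨4, by norm_num, 3 * γ / 2 - 1, by linarith [hγ.1],
    M ^ (1 / 2 : ℝ) * C₀ ^ (3 / 2 : ℝ), by positivity, ?_⟩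
  rintro ε ⟨hε, -⟩ f hfm hf0 hf2 hfL2 g hgm hg0 hg4
  set S := {x ∈ Ω | ε * f x ≤ M}
  have hSΩ : S ⊆ Ω := sep_subset Ω _
  have hfS : ∀ᵐ x ∂volume.restrict S, f x ≤ M / ε := by
    refine ae_restrict_of_forall_mem
      (hΩm.inter (measurableSet_le (hfm.const_mul ε) measurable_const)) fun x hx => ?_
    rw [le_div_iff₀ hε, mul_comm]
    exact hx.2
  have hf2S : ∫ x in S, f x ^ 2 ≤ (C₀ * ε ^ (γ - 1)) ^ 2 := by
    refine (setIntegral_mono_set hf2 (ae_of_all _ fun x => sq_nonneg _)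
      hSΩ.eventuallyLE).trans ?_
    rwa [← Real.sqrt_eq_rpow, Real.sqrt_le_left (by positivity)] at hfL2
  have hg4S : ∫ x in S, g x ^ (4 : ℝ) ≤ ∫ x in Ω, g x ^ (4 : ℝ) :=
    setIntegral_mono_set hg4 (ae_of_all _ fun x => Real.rpow_nonneg (hg0 x) _) hSΩ.eventuallyLE
  have holder := integral_sq_mul_le_of_ae_le (p := 4 / 3) (q := 4)
    ⟨by norm_num, by norm_num, by norm_num⟩ hfm.aestronglyMeasurable hgm.aestronglyMeasurable
    (ae_of_all _ hf0) (ae_of_all _ hg0) (by positivity) hfS (hf2.mono_set hSΩ) (hg4.mono_set hSΩ)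
    hf2S hg4S
  rw [show (2 * (4 / 3 - 1) : ℝ) = 2 / 3 by norm_num, show (1 / (4 / 3) : ℝ) = 3 / 4 by norm_num]
    at holder
  rw [← eps_mul_truncated_holder_bound_eq hε hM.le hC₀.le, mul_assoc]
  exact mul_le_mul_of_nonneg_left holder hε.le

/-- Lemma A.2 (Lᵖ-bounds) of the paper: the quadratic error terms in the rescaled displacement
gradient vanish in the linearization limit. -/
theorem lp_bound_lemma (Ω : Set (EuclideanSpace ℝ (Fin 2))) (hΩm : MeasurableSet Ω)
    (hΩfin : volume Ω < ⊤) (γ : ℝ) (hγ : γ ∈ Ioo (2 / 3 : ℝ) 1)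
    (C₀ M : ℝ) (hC₀ : 0 < C₀) (hM : 0 < M) :
    ∃ q : ℝ, 1 < q ∧ ∃ α > (0 : ℝ), ∃ C > (0 : ℝ),
      ∀ ε ∈ Ioc (0 : ℝ) 1,
        ∀ f : EuclideanSpace ℝ (Fin 2) → ℝ, Measurable f → (∀ x, 0 ≤ f x) →
          IntegrableOn (fun x => f x ^ 2) Ω →
          (∫ x in Ω, f x ^ 2) ^ (1 / 2 : ℝ) ≤ C₀ * ε ^ (γ - 1) →
          ∀ g : EuclideanSpace ℝ (Fin 2) → ℝ, Measurable g → (∀ x, 0 ≤ g x) →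
            IntegrableOn (fun x => g x ^ q) Ω →
            ε * ∫ x in {x ∈ Ω | ε * f x ≤ M}, f x ^ 2 * g x ≤
              C * ε ^ α * (∫ x in Ω, g x ^ q) ^ (1 / q) :=
  lp_bound_lemma_general Ω hΩm γ hγ C₀ M hC₀ hM
end

section
/- Let A₁, A₂ ⊆ ℝ² be Borel sets with H¹(A₁) < ∞ and H¹(A₂) < ∞. Then for every δ > 0 there exist open sets U₁, U₂ ⊆ ℝ² with dist(U₁, U₂) > 0 (in particular U₁ ∩ U₂ = ∅) such that H¹(A₁ ∪ A₂) − δ ≤ H¹(A₁ ∩ U₁) + H¹(A₂ ∩ U₂). -/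
open MeasureTheory Set

/-- Inner regularity by compact sets for sets of finite Hausdorff measure in Euclidean space. -/
lemma exists_isCompact_diff_lt_aux (A : Set (EuclideanSpace ℝ (Fin 2)))
    (hA : MeasurableSet A) (hAfin : μH[1] A < ⊤) {ε : ENNReal} (hε : ε ≠ 0) :
    ∃ K ⊆ A, IsCompact K ∧ μH[1] (A \ K) < ε := by
  set μ : Measure (EuclideanSpace ℝ (Fin 2)) := μH[1]
  have hεhalf : ε / 2 ≠ 0 := by
    simp [ENNReal.div_eq_zero_iff, hε]
  -- finite restricted measure; weakly regular on a metrizable space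
  haveI : IsFiniteMeasure (μ.restrict A) :=
    ⟨by rwa [Measure.restrict_apply_univ]⟩
  have hAν : (μ.restrict A) A ≠ ⊤ := by
    rw [Measure.restrict_apply hA, inter_self]; exact hAfin.ne
  obtain ⟨F, hFA, hFcl, hF⟩ := hA.exists_isClosed_diff_lt (μ := μ.restrict A) hAν hεhalf
  have hFmeas : MeasurableSet (A \ F) := hA.diff hFcl.measurableSet
  have hF' : μ (A \ F) < ε / 2 := by
    rwa [Measure.restrict_apply hFmeas, inter_eq_left.mpr diff_subset] at hF
  have hFfin : μ F < ⊤ := lt_of_le_of_lt (measure_mono hFA) hAfin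
  -- exhaust F by intersections with closed balls
  set S : ℕ → Set (EuclideanSpace ℝ (Fin 2)) := fun n => F \ Metric.closedBall 0 n
  have hanti : Antitone S := by
    intro m n hmn
    exact diff_subset_diff_right (Metric.closedBall_subset_closedBall (by exact_mod_cast hmn))
  have hiInter : ⋂ n, S n = ∅ := by
    ext x
    simp only [mem_iInter, mem_empty_iff_false, iff_false, not_forall]
    obtain ⟨n, hn⟩ := exists_nat_ge (‖x‖)
    exact ⟨n, fun h => h.2 (by simpa [Metric.mem_closedBall, dist_eq_norm] using hn)⟩
  have htend := tendsto_measure_iInter_atTop (μ := μ)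
    (fun n => (hFcl.measurableSet.diff Metric.isClosed_closedBall.measurableSet).nullMeasurableSet)
    hanti ⟨0, (lt_of_le_of_lt (measure_mono diff_subset) hFfin).ne⟩
  rw [hiInter, measure_empty] at htend
  have : ∀ᶠ n in Filter.atTop, μ (S n) < ε / 2 :=
    htend.eventually_lt_const (by exact hεhalf.bot_lt)
  obtain ⟨n, hn⟩ := this.exists
  refine ⟨F ∩ Metric.closedBall 0 n, (inter_subset_left).trans hFA,
    (isCompact_closedBall 0 n).inter_left hFcl, ?_⟩
  have hsubset : A \ (F ∩ Metric.closedBall 0 n) ⊆ (A \ F) ∪ S n := by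
    intro x hx
    rcases em (x ∈ F) with hxF | hxF
    · exact Or.inr ⟨hxF, fun hb => hx.2 ⟨hxF, hb⟩⟩
    · exact Or.inl ⟨hx.1, hxF⟩
  calc μ (A \ (F ∩ Metric.closedBall 0 n)) ≤ μ ((A \ F) ∪ S n) := measure_mono hsubset
    _ ≤ μ (A \ F) + μ (S n) := measure_union_le _ _
    _ < ε / 2 + ε / 2 := ENNReal.add_lt_add hF' hn
    _ = ε := ENNReal.add_halves ε

/-- Lemma A.3 of the paper: two Borel sets of finite `H¹`-measure can be localized, up to an
arbitrarily small error, into two open sets at positive distance from each other. -/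
theorem separating_with_disjoint_open_sets (A₁ A₂ : Set (EuclideanSpace ℝ (Fin 2)))
    (hA₁ : MeasurableSet A₁) (hA₂ : MeasurableSet A₂)
    (hA₁fin : μH[1] A₁ < ⊤) (hA₂fin : μH[1] A₂ < ⊤) :
    ∀ δ : ℝ, 0 < δ →
      ∃ U₁ U₂ : Set (EuclideanSpace ℝ (Fin 2)),
        IsOpen U₁ ∧ IsOpen U₂ ∧
        (∃ d > (0 : ℝ), ∀ x ∈ U₁, ∀ y ∈ U₂, d ≤ dist x y) ∧
        U₁ ∩ U₂ = ∅ ∧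
        μH[1] (A₁ ∪ A₂) - ENNReal.ofReal δ ≤ μH[1] (A₁ ∩ U₁) + μH[1] (A₂ ∩ U₂) := by
  intro δ hδ
  set μ : Measure (EuclideanSpace ℝ (Fin 2)) := μH[1]
  have hεpos : (ENNReal.ofReal δ) / 2 ≠ 0 := by
    simp [ENNReal.div_eq_zero_iff, ENNReal.ofReal_eq_zero, not_le, hδ]
  -- compact K₁ ⊆ A₁ almost exhausting A₁
  obtain ⟨K₁, hK₁A, hK₁c, hK₁⟩ := exists_isCompact_diff_lt_aux A₁ hA₁ hA₁fin hεpos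
  -- compact K₂ ⊆ A₂ \ K₁ almost exhausting A₂ \ K₁
  obtain ⟨K₂, hK₂A, hK₂c, hK₂⟩ := exists_isCompact_diff_lt_aux (A₂ \ K₁)
    (hA₂.diff hK₁c.isClosed.measurableSet)
    (lt_of_le_of_lt (measure_mono diff_subset) hA₂fin) hεpos
  have hdisj : Disjoint K₁ K₂ :=
    Set.disjoint_left.mpr fun x hx₁ hx₂ => (hK₂A hx₂).2 hx₁
  obtain ⟨r, hr, hthick⟩ := hdisj.exists_thickenings hK₁c hK₂c.isClosed
  refine ⟨Metric.thickening (r / 2) K₁, Metric.thickening (r / 2) K₂,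
    Metric.isOpen_thickening, Metric.isOpen_thickening, ⟨r / 2, by linarith, ?_⟩, ?_, ?_⟩
  · -- distance bound
    intro x hx y hy
    by_contra h
    push_neg at h
    obtain ⟨z, hz, hxz⟩ := Metric.mem_thickening_iff.mp hx
    obtain ⟨w, hw, hyw⟩ := Metric.mem_thickening_iff.mp hy
    have hy₁ : y ∈ Metric.thickening r K₁ := by
      refine Metric.mem_thickening_iff.mpr ⟨z, hz, ?_⟩
      calc dist y z ≤ dist y x + dist x z := dist_triangle _ _ _
        _ < r / 2 + r / 2 := by rw [dist_comm y x]; exact add_lt_add h hxz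
        _ = r := by ring
    have hy₂ : y ∈ Metric.thickening r K₂ :=
      Metric.mem_thickening_iff.mpr ⟨w, hw, by linarith⟩
    exact Set.disjoint_left.mp hthick hy₁ hy₂
  · -- disjointness of the open sets
    refine Set.eq_empty_of_forall_notMem fun y ⟨hy₁, hy₂⟩ => ?_
    exact Set.disjoint_left.mp hthick
      (Metric.thickening_mono (by linarith) K₁ hy₁)
      (Metric.thickening_mono (by linarith) K₂ hy₂)
  · -- the measure estimate
    have hK₁U : K₁ ⊆ A₁ ∩ Metric.thickening (r / 2) K₁ :=
      subset_inter hK₁A (Metric.self_subset_thickening (by linarith) K₁)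
    have hK₂U : K₂ ⊆ A₂ ∩ Metric.thickening (r / 2) K₂ :=
      subset_inter (hK₂A.trans diff_subset) (Metric.self_subset_thickening (by linarith) K₂)
    have hcover : A₁ ∪ A₂ ⊆ (K₁ ∪ (A₁ \ K₁)) ∪ (K₂ ∪ ((A₂ \ K₁) \ K₂)) := by
      intro x hx
      rcases em (x ∈ K₁) with hxK | hxK
      · exact Or.inl (Or.inl hxK)
      rcases hx with hx | hx
      · exact Or.inl (Or.inr ⟨hx, hxK⟩)
      · rcases em (x ∈ K₂) with hxK₂ | hxK₂
        · exact Or.inr (Or.inl hxK₂)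
        · exact Or.inr (Or.inr ⟨⟨hx, hxK⟩, hxK₂⟩)
    rw [tsub_le_iff_right]
    calc μ (A₁ ∪ A₂) ≤ μ ((K₁ ∪ (A₁ \ K₁)) ∪ (K₂ ∪ ((A₂ \ K₁) \ K₂))) := measure_mono hcover
      _ ≤ (μ K₁ + μ (A₁ \ K₁)) + (μ K₂ + μ ((A₂ \ K₁) \ K₂)) :=
        le_trans (measure_union_le _ _)
          (add_le_add (measure_union_le _ _) (measure_union_le _ _))
      _ ≤ (μ (A₁ ∩ Metric.thickening (r / 2) K₁) + ENNReal.ofReal δ / 2)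
          + (μ (A₂ ∩ Metric.thickening (r / 2) K₂) + ENNReal.ofReal δ / 2) :=
        add_le_add (add_le_add (measure_mono hK₁U) hK₁.le)
          (add_le_add (measure_mono hK₂U) hK₂.le)
      _ = μ (A₁ ∩ Metric.thickening (r / 2) K₁) + μ (A₂ ∩ Metric.thickening (r / 2) K₂)
          + ENNReal.ofReal δ := by
        rw [add_add_add_comm, ENNReal.add_halves]
end

section
/- Let r, c, L > 0, let SO(2) := { R ∈ ℝ^{2×2} : RᵀR = Id, det R = 1 }, and set N := { F ∈ ℝ^{2×2} : dist(F, SO(2)) < 2r }, where dist(F, SO(2)) := inf_{R ∈ SO(2)} ‖F − R‖ with respect to the Frobenius norm. Let W : ℝ^{2×2} → ℝ be Fréchet differentiable on N with W(R) = 0 for every R ∈ SO(2) and W(F) ≥ c · dist(F, SO(2))² for every F ∈ N, and assume the derivative map F ↦ DW(F) is Lipschitz on N with constant L. Then DW(R) = 0 for every R ∈ SO(2), and for every F ∈ ℝ^{2×2} with dist(F, SO(2)) < r one has ‖DW(F)‖ ≤ (L/√c) · √(W(F)). -/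
open Matrix Metric

attribute [local instance] Matrix.frobeniusNormedAddCommGroup Matrix.frobeniusNormedSpace

/-- The special orthogonal group `SO(2)` as a set of `2×2` real matrices. -/
def SO2 : Set (Matrix (Fin 2) (Fin 2) ℝ) := {R | Rᵀ * R = 1 ∧ R.det = 1}

/-
Near `SO(2)` the energy satisfies `W ≥ c · dist(·, SO(2))² ≥ 0 = W|SO(2)`, so every rotation is a
local minimum of `W` and the stress vanishes there. For `F` close to `SO(2)`, comparing `DW(F)` with
`DW(R) = 0` at the rotations `R` and taking the infimum over `R` gives `‖DW(F)‖ ≤ L · dist(F, SO(2))`,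
and the energy lower bound turns `√c · dist(F, SO(2))` into at most `√(W F)`.
-/

theorem one_mem_SO2 : (1 : Matrix (Fin 2) (Fin 2) ℝ) ∈ SO2 := by
  constructor <;> simp

theorem fderiv_eq_zero_of_nonneg_near_zero_set {E : Type*} [NormedAddCommGroup E]
    [NormedSpace ℝ E] {f : E → ℝ} {s : Set E} {δ : ℝ} (hδ : 0 < δ)
    (hf0 : ∀ x ∈ s, f x = 0) (hnonneg : ∀ y, infDist y s < δ → 0 ≤ f y) {x : E} (hx : x ∈ s) :
    fderiv ℝ f x = 0 := by
  have hmin : IsLocalMin f x := by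
    filter_upwards [ball_mem_nhds x hδ] with y hy
    rw [hf0 x hx]
    exact hnonneg y ((infDist_le_dist_of_mem hx).trans_lt hy)
  exact hmin.fderiv_eq_zero

theorem le_mul_infDist_of_forall_le_mul_dist {α : Type*} [PseudoMetricSpace α] {s : Set α}
    (hs : s.Nonempty) {L a : ℝ} (hL : 0 ≤ L) {x : α} (h : ∀ y ∈ s, a ≤ L * dist x y) :
    a ≤ L * infDist x s := by
  have : Nonempty s := hs.to_subtype
  rw [infDist_eq_iInf, Real.mul_iInf_of_nonneg hL]
  exact le_ciInf fun y => h y y.2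

theorem stress_bounded_by_sqrt_energy_general (r c L : ℝ) (hr : 0 < r) (hc : 0 < c) (hL : 0 < L)
    (W : Matrix (Fin 2) (Fin 2) ℝ → ℝ)
    (hW0 : ∀ R ∈ SO2, W R = 0)
    (hlow : ∀ F : Matrix (Fin 2) (Fin 2) ℝ, infDist F SO2 < 2 * r →
      c * infDist F SO2 ^ 2 ≤ W F)
    (hLip : ∀ F G : Matrix (Fin 2) (Fin 2) ℝ, infDist F SO2 < 2 * r → infDist G SO2 < 2 * r →
      ContinuousLinearMap.opNorm (fderiv ℝ W F - fderiv ℝ W G) ≤ L * ‖F - G‖) :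
    (∀ R ∈ SO2, fderiv ℝ W R = 0) ∧
      ∀ F : Matrix (Fin 2) (Fin 2) ℝ, infDist F SO2 < r →
        ContinuousLinearMap.opNorm (fderiv ℝ W F) ≤ L / Real.sqrt c * Real.sqrt (W F) := by
  have hstress0 : ∀ R ∈ SO2, fderiv ℝ W R = 0 := fun R hR =>
    fderiv_eq_zero_of_nonneg_near_zero_set (by linarith) hW0
      (fun F hF => (by positivity : 0 ≤ c * infDist F SO2 ^ 2).trans (hlow F hF)) hR
  refine ⟨hstress0, fun F hF => ?_⟩
  have hF2 : infDist F SO2 < 2 * r := by linarith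
  -- `‖fderiv ℝ W F‖` does not elaborate: the local Frobenius instance induces a topology that is
  -- not syntactically the product topology carried by `→L[ℝ]`, hence `opNorm` throughout.
  have hstress : (fderiv ℝ W F).opNorm ≤ L * infDist F SO2 := by
    refine le_mul_infDist_of_forall_le_mul_dist ⟨1, one_mem_SO2⟩ hL.le fun R hR => ?_
    have hR2 : infDist R SO2 < 2 * r := by rw [infDist_zero_of_mem hR]; linarith
    simpa [hstress0 R hR, dist_eq_norm] using hLip F R hF2 hR2
  have henergy : Real.sqrt c * infDist F SO2 ≤ Real.sqrt (W F) := by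
    rw [← Real.sqrt_sq infDist_nonneg, ← Real.sqrt_mul hc.le]
    exact Real.sqrt_le_sqrt (hlow F hF2)
  calc (fderiv ℝ W F).opNorm ≤ L * infDist F SO2 := hstress
    _ = L / Real.sqrt c * (Real.sqrt c * infDist F SO2) := by
      field_simp [(Real.sqrt_pos.mpr hc).ne']
    _ ≤ L / Real.sqrt c * Real.sqrt (W F) := by gcongr

/-- On a neighborhood of `SO(2)`, the stress `DW` is controlled by the square root of the
elastic energy density: `‖DW(F)‖ ≤ (L/√c) √(W F)` whenever `dist(F, SO(2)) < r`
(Lemma 4.1 of the paper). -/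
theorem stress_bounded_by_sqrt_energy (r c L : ℝ) (hr : 0 < r) (hc : 0 < c) (hL : 0 < L)
    (W : Matrix (Fin 2) (Fin 2) ℝ → ℝ)
    (hdiff : ∀ F : Matrix (Fin 2) (Fin 2) ℝ, infDist F SO2 < 2 * r → DifferentiableAt ℝ W F)
    (hW0 : ∀ R ∈ SO2, W R = 0)
    (hlow : ∀ F : Matrix (Fin 2) (Fin 2) ℝ, infDist F SO2 < 2 * r →
      c * infDist F SO2 ^ 2 ≤ W F)
    (hLip : ∀ F G : Matrix (Fin 2) (Fin 2) ℝ, infDist F SO2 < 2 * r → infDist G SO2 < 2 * r →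
      ContinuousLinearMap.opNorm (fderiv ℝ W F - fderiv ℝ W G) ≤ L * ‖F - G‖) :
    (∀ R ∈ SO2, fderiv ℝ W R = 0) ∧
      ∀ F : Matrix (Fin 2) (Fin 2) ℝ, infDist F SO2 < r →
        ContinuousLinearMap.opNorm (fderiv ℝ W F) ≤ L / Real.sqrt c * Real.sqrt (W F) :=
  stress_bounded_by_sqrt_energy_general r c L hr hc hL W hW0 hlow hLip
end
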